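/- With α_t, β_t, γ_t and D(t) as for the essential deformations (t₃₁ = t₃₂ = 0), set η₁ := α∧β∧γ + ᾱ∧β̄∧γ̄, η₂ := i·(α∧ᾱ − β∧β̄)∧(γ + γ̄), η₃ := α∧β̄∧γ + ᾱ∧β∧γ̄, η₄ := ᾱ∧β∧γ + α∧β̄∧γ̄. Then for every t = (t₁₁,t₁₂,t₂₁,t₂₂) ∈ ℂ⁴: −(α_t∧β_t∧γ_t)∧η₁ = i(1 + D(t)²)·Ω, −(α_t∧β_t∧γ_t)∧η₂ = −(t₁₂ + t₂₁)(1 + D(t))·Ω, −(α_t∧β_t∧γ_t)∧η₃ = −i(t₁₁D(t) + t₂₂)·Ω, and −(α_t∧β_t∧γ_t)∧η₄ = −i(t₂₂D(t) + t₁₁)·Ω. (These are the numerators of the holomorphic coordinate functions z_i(t) = Q(u_t, η_i) on Δ_[γ] after the normalization Q(u_t, η₀) = 1.) -/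
import Mathlib


noncomputable section

/-- The exterior algebra of `ℂ⁶` in which all cohomology computations on the Iwasawa
manifold are carried out. -/
abbrev Λ6 : Type := ExteriorAlgebra ℂ (Fin 6 → ℂ)

/-- The degree-one generator corresponding to the `i`-th basis vector of `ℂ⁶`. -/
def gen (i : Fin 6) : Λ6 := ExteriorAlgebra.ι ℂ (Pi.single i (1 : ℂ))

/-- `α` -/ def α : Λ6 := gen 0
/-- `β` -/ def β : Λ6 := gen 1
/-- `γ` -/ def γ : Λ6 := gen 2
/-- `ᾱ` -/ def α' : Λ6 := gen 3
/-- `β̄` -/ def β' : Λ6 := gen 4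
/-- `γ̄` -/ def γ' : Λ6 := gen 5

/-- The normalized volume form `Ω = (i·α∧ᾱ)∧(i·β∧β̄)∧(i·γ∧γ̄)`. -/
def Ω : Λ6 := (Complex.I • (α * α')) * (Complex.I • (β * β')) * (Complex.I • (γ * γ'))

/-- `η₁ = α∧β∧γ + ᾱ∧β̄∧γ̄` -/
def η₁ : Λ6 := α * β * γ + α' * β' * γ'
/-- `η₂ = i(α∧ᾱ − β∧β̄)∧(γ+γ̄)` -/
def η₂ : Λ6 := Complex.I • ((α * α' - β * β') * (γ + γ'))
/-- `η₃ = α∧β̄∧γ + ᾱ∧β∧γ̄` -/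
def η₃ : Λ6 := α * β' * γ + α' * β * γ'
/-- `η₄ = ᾱ∧β∧γ + α∧β̄∧γ̄` -/
def η₄ : Λ6 := α' * β * γ + α * β' * γ'

/-- The holomorphic (3,0)-form `u_t = α_t∧β_t∧γ_t` of an essential deformation
(`t₃₁ = t₃₂ = 0`, `D(t) = t₁₁t₂₂ − t₁₂t₂₁`). -/
def u (t11 t12 t21 t22 : ℂ) : Λ6 :=
  (α + t11 • α' + t12 • β') * (β + t21 • α' + t22 • β') *
    (γ - (t11 * t22 - t12 * t21) • γ')

lemma gsq (i : Fin 6) : gen i * gen i = 0 := ExteriorAlgebra.ι_sq_zero _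

lemma gsq' (i : Fin 6) (x : Λ6) : gen i * (gen i * x) = 0 := by
  rw [← mul_assoc, gsq, zero_mul]

lemma ganti (j i : Fin 6) : gen j * gen i = -(gen i * gen j) := by
  have h := ExteriorAlgebra.ι_sq_zero (R := ℂ) (M := Fin 6 → ℂ)
    (Pi.single i (1:ℂ) + Pi.single j 1)
  simp only [map_add, add_mul, mul_add, ExteriorAlgebra.ι_sq_zero, zero_add, add_zero] at h
  unfold gen
  linear_combination (norm := noncomm_ring) h

lemma ganti' (j i : Fin 6) (x : Λ6) : gen j * (gen i * x) = -(gen i * (gen j * x)) := by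
  rw [← mul_assoc, ganti, neg_mul, mul_assoc]

lemma I_pow_three : Complex.I ^ 3 = -Complex.I := by
  rw [(by norm_num : 3 = 2 + 1), pow_succ, Complex.I_sq]; ring

set_option maxHeartbeats 2000000 in
/-- The numerators of the holomorphic coordinates `z_i(t) = Q(u_t, η_i)` on `Δ_[γ]`. -/
theorem Q_u_t_eta_i (t11 t12 t21 t22 : ℂ) :
    -(u t11 t12 t21 t22 * η₁)
        = (Complex.I * (1 + (t11 * t22 - t12 * t21) ^ 2)) • Ω ∧
    -(u t11 t12 t21 t22 * η₂)
        = (-((t12 + t21) * (1 + (t11 * t22 - t12 * t21)))) • Ω ∧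
    -(u t11 t12 t21 t22 * η₃)
        = (-(Complex.I * (t11 * (t11 * t22 - t12 * t21) + t22))) • Ω ∧
    -(u t11 t12 t21 t22 * η₄)
        = (-(Complex.I * (t22 * (t11 * t22 - t12 * t21) + t11))) • Ω := by
  refine ⟨?_, ?_, ?_, ?_⟩ <;>
  · simp only [u, η₁, η₂, η₃, η₄, Ω, α, β, γ, α', β', γ',
      mul_add, add_mul, sub_mul, mul_sub, smul_mul_assoc, mul_smul_comm, mul_assoc,
      neg_mul, mul_neg, smul_neg, neg_neg, smul_smul,
      gsq, gsq', ganti 1 0, ganti 2 0, ganti 2 1, ganti 3 0, ganti 3 1, ganti 3 2,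
      ganti 4 0, ganti 4 1, ganti 4 2, ganti 4 3, ganti 5 0, ganti 5 1, ganti 5 2,
      ganti 5 3, ganti 5 4,
      ganti' 1 0, ganti' 2 0, ganti' 2 1, ganti' 3 0, ganti' 3 1, ganti' 3 2,
      ganti' 4 0, ganti' 4 1, ganti' 4 2, ganti' 4 3, ganti' 5 0, ganti' 5 1, ganti' 5 2,
      ganti' 5 3, ganti' 5 4,
      mul_zero, zero_mul, smul_zero, add_zero, zero_add, neg_zero]
    match_scalars <;> (ring_nf; try simp only [I_pow_three, Complex.I_pow_four, Complex.I_sq]; try ring)
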